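/- arXiv:1105.5102 — 2 statements merged into one kernel-verified Lean document; each statement's English description precedes it below -/
import Mathlib

section
/- Let U ⊆ ℂ be open and convex, let 0 < δ < 1/4, let ψ : U → ℂ be holomorphic with |ψ(z) − 1| < δ for all z ∈ U, let g : U → ℂ be the principal square root of ψ, and let G : U → ℂ be a primitive of g (i.e., G is differentiable with deriv G = g on U). Then for all p, q ∈ U: |(G(p) − G(q)) − (p − q)| ≤ δ·|p − q|; consequently (1 − δ)|p − q| ≤ |G(p) − G(q)| ≤ (1 + δ)|p − q| for all p, q ∈ U, the map G is injective on U, and |p − q| > (4/5)·|G(p) − G(q)| whenever p ≠ q. -/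
/-!
Since `g² = ψ` and `Re g > 0`, factoring `ψ - 1 = (g - 1)(g + 1)` with `‖g + 1‖ ≥ Re (g + 1) > 1`
gives `‖g - 1‖ < δ`. The mean value inequality on the convex set `U`, applied to `G - id`,
turns this into `‖(G p - G q) - (p - q)‖ ≤ δ‖p - q‖`, and the remaining estimates follow from
the triangle inequality together with `1 - δ > 0` and `(4/5)(1 + δ) < 1`.
-/

/-- `g` is the principal square root of `ψ` on `U`: it is holomorphic on `U`, with
`g² = ψ` and `Re g > 0` on `U`. -/
def IsPrincipalSqrtOn (U : Set ℂ) (ψ g : ℂ → ℂ) : Prop :=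
  DifferentiableOn ℂ g U ∧ ∀ z ∈ U, g z ^ 2 = ψ z ∧ 0 < (g z).re

theorem Complex.norm_sub_one_le_norm_sq_sub_one {w : ℂ} (hw : 0 ≤ w.re) :
    ‖w - 1‖ ≤ ‖w ^ 2 - 1‖ := by
  have h_one_le : 1 ≤ ‖w + 1‖ :=
    calc (1 : ℝ) ≤ (w + 1).re := by simpa using hw
      _ ≤ ‖w + 1‖ := Complex.re_le_norm _
  calc ‖w - 1‖ = ‖w - 1‖ * 1 := (mul_one _).symm
    _ ≤ ‖w - 1‖ * ‖w + 1‖ := by gcongr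
    _ = ‖w ^ 2 - 1‖ := by rw [← norm_mul]; ring_nf

theorem Convex.norm_image_sub_sub_le_of_norm_deriv_sub_one_le {𝕜 : Type*} [RCLike 𝕜]
    {s : Set 𝕜} (hs : Convex ℝ s) {f f' : 𝕜 → 𝕜} {C : ℝ}
    (hf : ∀ z ∈ s, HasDerivAt f (f' z) z) (hbound : ∀ z ∈ s, ‖f' z - 1‖ ≤ C)
    {p q : 𝕜} (hp : p ∈ s) (hq : q ∈ s) :
    ‖(f p - f q) - (p - q)‖ ≤ C * ‖p - q‖ := by
  have h := hs.norm_image_sub_le_of_norm_hasDerivWithin_le (f := fun z => f z - z)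
    (fun z hz => ((hf z hz).sub (hasDerivAt_id z)).hasDerivWithinAt) hbound hq hp
  simpa only [sub_sub_sub_comm] using h

theorem norm_mem_Icc_of_norm_sub_le {E : Type*} [SeminormedAddCommGroup E] {a b : E} {δ : ℝ}
    (h : ‖a - b‖ ≤ δ * ‖b‖) :
    ‖a‖ ∈ Set.Icc ((1 - δ) * ‖b‖) ((1 + δ) * ‖b‖) := by
  have h_lower : ‖b‖ - ‖a - b‖ ≤ ‖a‖ := by
    simpa only [sub_sub_cancel, norm_sub_rev b] using norm_sub_norm_le b (b - a)
  have h_upper : ‖a‖ ≤ ‖a - b‖ + ‖b‖ := by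
    simpa only [sub_add_cancel] using norm_add_le (a - b) b
  constructor <;> linarith

theorem natural_coordinate_estimates_general (U : Set ℂ) (hconv : Convex ℝ U)
    (δ : ℝ) (hδ : δ < 1 / 4) (ψ g G : ℂ → ℂ)
    (hψb : ∀ z ∈ U, ‖ψ z - 1‖ < δ)
    (hg : IsPrincipalSqrtOn U ψ g)
    (hG : ∀ z ∈ U, HasDerivAt G (g z) z) :
    (∀ p ∈ U, ∀ q ∈ U,
      ‖(G p - G q) - (p - q)‖ ≤ δ * ‖p - q‖) ∧
    (∀ p ∈ U, ∀ q ∈ U,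
      (1 - δ) * ‖p - q‖ ≤ ‖G p - G q‖ ∧
      ‖G p - G q‖ ≤ (1 + δ) * ‖p - q‖) ∧
    Set.InjOn G U ∧
    (∀ p ∈ U, ∀ q ∈ U, p ≠ q →
      ‖p - q‖ > (4 / 5) * ‖G p - G q‖) := by
  have hg_near_one : ∀ z ∈ U, ‖g z - 1‖ ≤ δ := fun z hz => by
    obtain ⟨hsq, hre⟩ := hg.2 z hz
    have := Complex.norm_sub_one_le_norm_sq_sub_one hre.le
    rw [hsq] at this
    linarith [hψb z hz]
  have hnear : ∀ p ∈ U, ∀ q ∈ U, ‖(G p - G q) - (p - q)‖ ≤ δ * ‖p - q‖ :=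
    fun p hp q hq => hconv.norm_image_sub_sub_le_of_norm_deriv_sub_one_le hG hg_near_one hp hq
  have hbounds : ∀ p ∈ U, ∀ q ∈ U,
      (1 - δ) * ‖p - q‖ ≤ ‖G p - G q‖ ∧ ‖G p - G q‖ ≤ (1 + δ) * ‖p - q‖ :=
    fun p hp q hq => norm_mem_Icc_of_norm_sub_le (hnear p hp q hq)
  refine ⟨hnear, hbounds, fun p hp q hq hGpq => ?_, fun p hp q hq hpq => ?_⟩
  · have h := (hbounds p hp q hq).1
    rw [hGpq, sub_self, norm_zero] at h
    have : ‖p - q‖ ≤ 0 := nonpos_of_mul_nonpos_right h (by linarith)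
    exact sub_eq_zero.mp (norm_le_zero_iff.mp this)
  · have hpos : 0 < ‖p - q‖ := norm_pos_iff.mpr (sub_ne_zero.mpr hpq)
    nlinarith [(hbounds p hp q hq).2]

/-- Parts (i)–(ii) of Lemma 2.5 of the paper, in the planar model: if `ψ` is
holomorphic on an open convex set `U` with `|ψ − 1| < δ < 1/4` on `U`, `g` is the
principal square root of `ψ`, and `G` is a primitive of `g` on `U`, then
`|(G p − G q) − (p − q)| ≤ δ|p − q|`; consequently
`(1 − δ)|p − q| ≤ |G p − G q| ≤ (1 + δ)|p − q|`, `G` is injective on `U`, and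
`|p − q| > (4/5)|G p − G q|` for distinct `p, q ∈ U`. -/
theorem natural_coordinate_estimates (U : Set ℂ) (hU : IsOpen U) (hconv : Convex ℝ U)
    (δ : ℝ) (hδ0 : 0 < δ) (hδ : δ < 1 / 4) (ψ g G : ℂ → ℂ)
    (hψ : DifferentiableOn ℂ ψ U)
    (hψb : ∀ z ∈ U, ‖ψ z - 1‖ < δ)
    (hg : IsPrincipalSqrtOn U ψ g)
    (hG : ∀ z ∈ U, HasDerivAt G (g z) z) :
    (∀ p ∈ U, ∀ q ∈ U,
      ‖(G p - G q) - (p - q)‖ ≤ δ * ‖p - q‖) ∧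
    (∀ p ∈ U, ∀ q ∈ U,
      (1 - δ) * ‖p - q‖ ≤ ‖G p - G q‖ ∧
      ‖G p - G q‖ ≤ (1 + δ) * ‖p - q‖) ∧
    Set.InjOn G U ∧
    (∀ p ∈ U, ∀ q ∈ U, p ≠ q →
      ‖p - q‖ > (4 / 5) * ‖G p - G q‖) :=
  natural_coordinate_estimates_general U hconv δ hδ ψ g G hψb hg hG
end

section
/- Let U ⊆ ℂ be open and convex, let 0 < δ < 1/4, let ψ : U → ℂ be holomorphic with |ψ(z) − 1| < δ on U, let g be the principal square root of ψ, and let G be a primitive of g on U. Let a, b ∈ U with [a, b] ⊆ U, and set w = |Re(b − a)|, h = |Im(b − a)|, L = |b − a| (the width, height, and length of the segment with respect to dz²) and w′ = |Re(G(b) − G(a))|, h′ = |Im(G(b) − G(a))|, L′ = |G(b) − G(a)| (the width, height, and length of the ψ-geodesic from a to b with respect to ψ). Then max(|L′ − L|, |w′ − w|, |h′ − h|) ≤ δ·L. -/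
/-!
Since `g² − 1 = (g − 1)(g + 1)` and `‖g + 1‖ ≥ Re g + 1 ≥ 1`, the bound `‖ψ − 1‖ < δ`
gives `‖g − 1‖ ≤ δ` on `U`. By the mean value inequality applied to `G − id` along
`[a, b]`, the holonomy `G b − G a` differs from `b − a` by at most `δ‖b − a‖`, and
length, width and height are all `1`-Lipschitz functions of a complex number.
-/

theorem Complex.norm_sub_one_le_norm_sq_sub_one_s6 {z : ℂ} (hz : 0 ≤ z.re) :
    ‖z - 1‖ ≤ ‖z ^ 2 - 1‖ := by
  have h_one_le : 1 ≤ ‖z + 1‖ :=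
    calc (1 : ℝ) ≤ (z + 1).re := by simp only [Complex.add_re, Complex.one_re]; linarith
      _ ≤ ‖z + 1‖ := Complex.re_le_norm _
  calc ‖z - 1‖ ≤ ‖z - 1‖ * ‖z + 1‖ := le_mul_of_one_le_right (norm_nonneg _) h_one_le
    _ = ‖z ^ 2 - 1‖ := by rw [← norm_mul]; ring_nf

theorem Convex.norm_image_sub_sub_smul_le_of_norm_hasDerivWithin_sub_le
    {𝕜 E : Type*} [RCLike 𝕜] [NormedAddCommGroup E] [NormedSpace 𝕜 E]
    {f f' : 𝕜 → E} {s : Set 𝕜} {x y : 𝕜} {c : E} {C : ℝ}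
    (hf : ∀ z ∈ s, HasDerivWithinAt f (f' z) s z) (bound : ∀ z ∈ s, ‖f' z - c‖ ≤ C)
    (hs : Convex ℝ s) (xs : x ∈ s) (ys : y ∈ s) :
    ‖f y - f x - (y - x) • c‖ ≤ C * ‖y - x‖ := by
  have hfc : ∀ z ∈ s, HasDerivWithinAt (fun z => f z - z • c) (f' z - c) s z := fun z hz => by
    simpa using (hf z hz).fun_sub ((hasDerivWithinAt_id z s).smul_const c)
  have := hs.norm_image_sub_le_of_norm_hasDerivWithin_le hfc bound xs ys
  rwa [sub_sub_sub_comm, ← sub_smul] at this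

theorem Complex.max_abs_sub_norm_re_im_le_norm_sub (u v : ℂ) :
    max (max |‖u‖ - ‖v‖| |(|u.re| - |v.re|)|) |(|u.im| - |v.im|)| ≤ ‖u - v‖ := by
  refine max_le (max_le (abs_norm_sub_norm_le u v) ?_) ?_
  · calc |(|u.re| - |v.re|)| ≤ |u.re - v.re| := abs_abs_sub_abs_le_abs_sub _ _
      _ = |(u - v).re| := by rw [Complex.sub_re]
      _ ≤ ‖u - v‖ := Complex.abs_re_le_norm _
  · calc |(|u.im| - |v.im|)| ≤ |u.im - v.im| := abs_abs_sub_abs_le_abs_sub _ _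
      _ = |(u - v).im| := by rw [Complex.sub_im]
      _ ≤ ‖u - v‖ := Complex.abs_im_le_norm _

theorem width_height_length_comparison_general (U : Set ℂ)
    (δ : ℝ) (ψ g G : ℂ → ℂ)
    (hψb : ∀ z ∈ U, ‖ψ z - 1‖ < δ)
    (hg : IsPrincipalSqrtOn U ψ g)
    (hG : ∀ z ∈ U, HasDerivAt G (g z) z)
    (a b : ℂ)
    (hseg : segment ℝ a b ⊆ U)
    (w h L w' h' L' : ℝ)
    (hw : w = |(b - a).re|) (hh : h = |(b - a).im|) (hL : L = ‖b - a‖)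
    (hw' : w' = |(G b - G a).re|) (hh' : h' = |(G b - G a).im|)
    (hL' : L' = ‖G b - G a‖) :
    max (max |L' - L| |w' - w|) |h' - h| ≤ δ * L := by
  subst hw hh hL hw' hh' hL'
  have hg_near_one : ∀ z ∈ segment ℝ a b, ‖g z - 1‖ ≤ δ := fun z hz => by
    obtain ⟨hsq, hre⟩ := hg.2 z (hseg hz)
    calc ‖g z - 1‖ ≤ ‖g z ^ 2 - 1‖ := Complex.norm_sub_one_le_norm_sq_sub_one_s6 hre.le
      _ ≤ δ := hsq ▸ (hψb z (hseg hz)).le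
  have holonomy : ‖G b - G a - (b - a)‖ ≤ δ * ‖b - a‖ := by
    simpa using (convex_segment a b).norm_image_sub_sub_smul_le_of_norm_hasDerivWithin_sub_le
      (fun z hz => (hG z (hseg hz)).hasDerivWithinAt) hg_near_one
      (left_mem_segment ℝ a b) (right_mem_segment ℝ a b) (c := (1 : ℂ))
  exact (Complex.max_abs_sub_norm_re_im_le_norm_sub _ _).trans holonomy

/-- Part (v) of Lemma 2.5 of the paper, in the planar model: with `ψ`, `g`, `G` as
before on an open convex `U`, and `a, b ∈ U` with `[a,b] ⊆ U`, the width
`w = |Re(b − a)|`, height `h = |Im(b − a)|`, and length `L = |b − a|` of the segment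
with respect to `dz²`, and the corresponding quantities `w′ = |Re(G b − G a)|`,
`h′ = |Im(G b − G a)|`, `L′ = |G b − G a|` of the `ψ`-geodesic from `a` to `b`,
satisfy `max(|L′ − L|, |w′ − w|, |h′ − h|) ≤ δL`. -/
theorem width_height_length_comparison (U : Set ℂ) (hU : IsOpen U)
    (hconv : Convex ℝ U)
    (δ : ℝ) (hδ0 : 0 < δ) (hδ : δ < 1 / 4) (ψ g G : ℂ → ℂ)
    (hψ : DifferentiableOn ℂ ψ U)
    (hψb : ∀ z ∈ U, ‖ψ z - 1‖ < δ)
    (hg : IsPrincipalSqrtOn U ψ g)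
    (hG : ∀ z ∈ U, HasDerivAt G (g z) z)
    (a b : ℂ) (ha : a ∈ U) (hb : b ∈ U)
    (hseg : segment ℝ a b ⊆ U)
    (w h L w' h' L' : ℝ)
    (hw : w = |(b - a).re|) (hh : h = |(b - a).im|) (hL : L = ‖b - a‖)
    (hw' : w' = |(G b - G a).re|) (hh' : h' = |(G b - G a).im|)
    (hL' : L' = ‖G b - G a‖) :
    max (max |L' - L| |w' - w|) |h' - h| ≤ δ * L :=
  width_height_length_comparison_general U δ ψ g G hψb hg hG a b hseg w h L w' h' L' hw hh hL hw'
    hh' hL'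
end
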